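/- Let G be a group, n ≥ 1 a natural number, and 𝒞 a cofamily of subgroups of G that is closed under passage to finite index subgroups. Let L ≤ G be a subgroup and α : L → Σₙ a group homomorphism. Then the graph subgroup Γ(L, α) lies in C(𝒞, n) if and only if L ∈ 𝒞. -/

import Mathlib

variable {G : Type*} [Group G] {n : ℕ}

/-- The stabilizer subgroup `Δᵢ = {δ ∈ Δ : p(δ) i = i}` of a subgroup
`Δ ≤ G × Σₙ`. -/
def stab (Δ : Subgroup (G × Equiv.Perm (Fin n))) (i : Fin n) :
    Subgroup (G × Equiv.Perm (Fin n)) where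
  carrier := {x | x ∈ Δ ∧ x.2 i = i}
  one_mem' := ⟨Δ.one_mem, rfl⟩
  mul_mem' := by
    rintro a b ⟨haΔ, ha⟩ ⟨hbΔ, hb⟩
    exact ⟨Δ.mul_mem haΔ hbΔ, by simp [Equiv.Perm.mul_apply, hb, ha]⟩
  inv_mem' := by
    rintro a ⟨haΔ, ha⟩
    exact ⟨Δ.inv_mem haΔ, by simp [Equiv.Perm.inv_eq_iff_eq, Equiv.symm_apply_eq, ha]⟩

/-- The collection `C(𝒞, n)` of subgroups `Δ ≤ G × Σₙ` such that
`π(Δᵢ) ∈ 𝒞` for every `i : Fin n`. -/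
def Cfam (𝒞 : Set (Subgroup G)) (n : ℕ) : Set (Subgroup (G × Equiv.Perm (Fin n))) :=
  {Δ | ∀ i : Fin n, (stab Δ i).map (MonoidHom.fst G (Equiv.Perm (Fin n))) ∈ 𝒞}

/-- The graph subgroup `Γ(L, α) = {(x, α x) : x ∈ L}` of `G × Σₙ`. -/
def graphSubgroup (L : Subgroup G) (α : L →* Equiv.Perm (Fin n)) :
    Subgroup (G × Equiv.Perm (Fin n)) :=
  ((L.subtype).prod α).range

theorem graphSubgroup_mem_Cfam_iff (𝒞 : Set (Subgroup G))
    (hconj : ∀ H ∈ 𝒞, ∀ g : G, H.map (MulAut.conj g).toMonoidHom ∈ 𝒞)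
    (hup : ∀ H ∈ 𝒞, ∀ H' : Subgroup G, H ≤ H' → H' ∈ 𝒞)
    (hfi : ∀ H ∈ 𝒞, ∀ K : Subgroup G, K ≤ H → K.relIndex H ≠ 0 → K ∈ 𝒞)
    (hn : 1 ≤ n) (L : Subgroup G) (α : L →* Equiv.Perm (Fin n)) :
    graphSubgroup L α ∈ Cfam 𝒞 n ↔ L ∈ 𝒞 := by
  constructor
  · intro h
    refine hup _ (h ⟨0, hn⟩) L ?_
    rintro x ⟨y, ⟨hyΓ, _⟩, rfl⟩
    obtain ⟨l, rfl⟩ := hyΓ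
    exact l.2
  · intro hL i
    set S : Subgroup L :=
      Subgroup.comap α (MulAction.stabilizer (Equiv.Perm (Fin n)) i) with hS
    set K : Subgroup G := S.map L.subtype with hK
    have hKL : K ≤ L := by
      rintro x ⟨s, _, rfl⟩; exact s.2
    have heq : (stab (graphSubgroup L α) i).map
        (MonoidHom.fst G (Equiv.Perm (Fin n))) = K := by
      ext x
      constructor
      · rintro ⟨y, ⟨hyΓ, hyi⟩, rfl⟩
        obtain ⟨l, rfl⟩ := hyΓ
        exact ⟨l, hyi, rfl⟩
      · rintro ⟨s, hs, rfl⟩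
        exact ⟨(↑s, α s), ⟨⟨s, rfl⟩, hs⟩, rfl⟩
    rw [heq]
    have hidx : S.index ≠ 0 := by
      rw [hS, Subgroup.index_comap]
      exact Subgroup.index_ne_zero_of_finite
    have hrel : K.relIndex L ≠ 0 := by
      have : Subgroup.comap L.subtype K = S :=
        Subgroup.comap_map_eq_self_of_injective L.subtype_injective S
      simpa [Subgroup.relIndex, Subgroup.subgroupOf, this] using hidx
    exact hfi L hL K hKL hrel
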